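/- Let d ≥ 2 be an integer, let n_y > 0 be real, and let n_Z be a d×d real symmetric positive semidefinite matrix with 0 < rank(n_Z) < d; set n := (0, n_y, n_Z) ∈ E and F_s := {(x, 0, Z) ∈ E : x ≤ 0, Z positive semidefinite, tr(Z·n_Z) = 0} (which equals K_logdet ∩ {n}^⊥). Then for every η > 0 there exists κ > 0 such that for every q ∈ E with ⟨q, n⟩ = 0 and ‖q‖ ≤ η one has dist(q, F_s) ≤ κ · dist(q, K_logdet)^{1/2}. -/

import Mathlib

open Matrix Filter

noncomputable section

/-- The space `E = ℝ × ℝ × S^d` (matrix parts are required to be symmetric where relevant). -/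
abbrev E (d : ℕ) : Type := ℝ × ℝ × Matrix (Fin d) (Fin d) ℝ

/-- The inner product `⟨(x,y,Z),(x',y',Z')⟩ = x x' + y y' + tr (Z Z')` on `E`. -/
def ip {d : ℕ} (p q : E d) : ℝ := p.1 * q.1 + p.2.1 * q.2.1 + (p.2.2 * q.2.2).trace

/-- The induced norm `‖(x,y,Z)‖ = sqrt (x² + y² + tr (Z²))` on `E`. -/
def nrm {d : ℕ} (p : E d) : ℝ := Real.sqrt (p.1 ^ 2 + p.2.1 ^ 2 + (p.2.2 * p.2.2).trace)

/-- Distance from a point to a set: `dist(p, S) = inf {‖p - s‖ : s ∈ S}`. -/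
def sdist {d : ℕ} (p : E d) (S : Set (E d)) : ℝ := sInf {r : ℝ | ∃ s ∈ S, r = nrm (p - s)}

/-- The log-determinant cone `K_logdet`. -/
def Klogdet (d : ℕ) : Set (E d) :=
  {p | (0 < p.2.1 ∧ p.2.2.PosDef ∧ p.1 ≤ p.2.1 * Real.log ((p.2.1⁻¹ • p.2.2).det))
    ∨ (p.1 ≤ 0 ∧ p.2.1 = 0 ∧ p.2.2.PosSemidef)}

/-!
For `p = (x, y, Z) ∈ K_logdet`, the bound `det Z ≤ (tr Z)^d` turns the defining inequality into
`x ≤ 2d √(y tr Z)`, while `⟨p, n⟩ = y n_y + tr(Z n_Z)` controls both `y` and `tr(Z n_Z)`. Let `P`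
be the orthogonal projection onto `ker n_Z` and `λ` the least positive eigenvalue of `n_Z`; then
`λ ‖Z - PZP‖² ≤ 2 tr Z · tr(Z n_Z)`. So on bounded sets the point `(min x 0, 0, PZP) ∈ F_s` is
within `O(√⟨p, n⟩)` of `p`, and for `q ⊥ n` we have `⟨p, n⟩ = ⟨p - q, n⟩ ≤ ‖n‖ ‖p - q‖`.
-/

open scoped MatrixOrder Topology

namespace Matrix

lemma PosSemidef.isSymm {n : Type*} {A : Matrix n n ℝ} (hA : A.PosSemidef) : A.IsSymm :=
  isHermitian_iff_isSymm.1 hA.1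

variable {n : Type*} [Fintype n] [DecidableEq n]

lemma PosSemidef.trace_mul_nonneg {A B : Matrix n n ℝ} (hA : A.PosSemidef) (hB : B.PosSemidef) :
    0 ≤ (A * B).trace := by
  obtain ⟨C, rfl⟩ : ∃ C : Matrix n n ℝ, A = Cᴴ * C :=
    CStarAlgebra.nonneg_iff_eq_star_mul_self.mp hA.nonneg
  rw [Matrix.mul_assoc, trace_mul_comm]
  simpa [Matrix.mul_assoc] using (hB.mul_mul_conjTranspose_same C).trace_nonneg

lemma PosSemidef.eigenvalues_le_trace {A : Matrix n n ℝ} (hA : A.PosSemidef) (i : n) :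
    hA.1.eigenvalues i ≤ A.trace := by
  rw [hA.1.trace_eq_sum_eigenvalues]
  exact Finset.single_le_sum (fun j _ => hA.eigenvalues_nonneg j) (Finset.mem_univ i)

lemma PosSemidef.spectrum_subset_Icc {A : Matrix n n ℝ} (hA : A.PosSemidef) :
    spectrum ℝ A ⊆ Set.Icc 0 A.trace := by
  rw [hA.1.spectrum_real_eq_range_eigenvalues]
  rintro _ ⟨i, rfl⟩
  exact ⟨hA.eigenvalues_nonneg i, hA.eigenvalues_le_trace i⟩

lemma PosSemidef.det_le_trace_pow {A : Matrix n n ℝ} (hA : A.PosSemidef) :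
    A.det ≤ A.trace ^ Fintype.card n := by
  rw [hA.1.det_eq_prod_eigenvalues, ← Finset.card_univ, ← Finset.prod_const]
  exact Finset.prod_le_prod (fun i _ => hA.eigenvalues_nonneg i)
    fun i _ => hA.eigenvalues_le_trace i

lemma PosSemidef.trace_smul_sub_mul_self {A : Matrix n n ℝ} (hA : A.PosSemidef) :
    (A.trace • A - A * A).PosSemidef := by
  have hA' : IsSelfAdjoint A := hA.1
  rw [← nonneg_iff_posSemidef, ← cfc_const_mul_id A.trace A, ← sq, ← cfc_pow_id (R := ℝ) A 2,
    ← cfc_sub (A.trace * ·) (· ^ 2) A]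
  exact cfc_nonneg fun x hx => by
    obtain ⟨h0, h1⟩ := hA.spectrum_subset_Icc hx
    nlinarith

lemma PosSemidef.exists_pos_le_spectrum_of_ne_zero {A : Matrix n n ℝ} (hA : A.PosSemidef) :
    ∃ c > 0, ∀ x ∈ spectrum ℝ A, x ≠ 0 → c ≤ x := by
  have h : ∀ᶠ c in 𝓝[>] (0 : ℝ), ∀ x ∈ spectrum ℝ A, x ≠ 0 → c ≤ x := by
    refine A.finite_real_spectrum.eventually_all.2 fun x hx => ?_
    rcases (hA.spectrum_subset_Icc hx).1.eq_or_lt with rfl | hx0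
    · exact .of_forall fun _ h => absurd rfl h
    · filter_upwards [Ioo_mem_nhdsGT hx0] with c hc _ using hc.2.le
  exact (h.and self_mem_nhdsWithin).exists.imp fun c hc => ⟨hc.2, hc.1⟩

lemma PosSemidef.exists_projection_smul_le {A : Matrix n n ℝ} (hA : A.PosSemidef) :
    ∃ c : ℝ, 0 < c ∧ ∃ Q : Matrix n n ℝ, Q.PosSemidef ∧ Q * Q = Q ∧ (1 - Q) * A = 0 ∧
      (A - c • Q).PosSemidef := by
  have hA' : IsSelfAdjoint A := hA.1
  obtain ⟨c, hc, hcle⟩ := hA.exists_pos_le_spectrum_of_ne_zero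
  have hcont (f : ℝ → ℝ) : ContinuousOn f (spectrum ℝ A) := A.finite_real_spectrum.continuousOn f
  set ind : ℝ → ℝ := fun x => if x = 0 then 0 else 1
  refine ⟨c, hc, cfc ind A, nonneg_iff_posSemidef.1 (cfc_nonneg fun x _ => ?_), ?_, ?_, ?_⟩
  · simp only [ind]; split_ifs <;> norm_num
  · rw [← cfc_mul ind ind A (hcont _) (hcont _)]
    exact cfc_congr fun x _ => by simp only [ind]; split_ifs <;> norm_num
  · have : (1 - cfc ind A) * A = cfc (fun x => (1 - ind x) * x) A := by
      rw [cfc_mul _ _ A (hcont _) (hcont _), cfc_sub _ _ A (hcont _) (hcont _), cfc_const_one ℝ A,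
        cfc_id' ℝ A]
    rw [this, ← cfc_zero ℝ A]
    exact cfc_congr fun x _ => by simp only [ind]; split_ifs with h <;> simp [h]
  · have : A - c • cfc ind A = cfc (fun x => x - c * ind x) A := by
      rw [cfc_sub _ _ A (hcont _) (hcont _), cfc_const_mul _ _ A (hcont _), cfc_id' ℝ A]
    rw [this, ← nonneg_iff_posSemidef]
    refine cfc_nonneg fun x hx => ?_
    simp only [ind]
    split_ifs with h
    · simp [h]
    · linarith [hcle x hx h]

lemma PosSemidef.trace_sq_sub_conj_le {Z Q : Matrix n n ℝ} (hZ : Z.PosSemidef)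
    (hQ : Q.PosSemidef) (hQQ : Q * Q = Q) :
    ((Z - (1 - Q) * Z * (1 - Q)) * (Z - (1 - Q) * Z * (1 - Q))).trace
      ≤ 2 * Z.trace * (Z * Q).trace := by
  set P := 1 - Q with hP
  have hPP : P * P = P := by rw [hP, sub_mul, mul_sub, mul_sub, hQQ]; noncomm_ring
  have hsq : ((Z - P * Z * P) * (Z - P * Z * P)).trace = (Z * Z).trace - (Z * P * Z * P).trace := by
    have e1 : (Z - P * Z * P) * (Z - P * Z * P)
        = Z * Z - Z * P * Z * P - (P * Z * P) * Z + P * Z * (P * P) * Z * P := by noncomm_ring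
    have e2 : (P * Z * P * Z).trace = (Z * P * Z * P).trace := by
      rw [trace_mul_comm, ← Matrix.mul_assoc, ← Matrix.mul_assoc]
    have e3 : (P * Z * P * Z * P).trace = (Z * P * Z * P).trace := by
      rw [trace_mul_comm, ← Matrix.mul_assoc, ← Matrix.mul_assoc, ← Matrix.mul_assoc, hPP, e2]
    rw [e1, hPP, trace_add, trace_sub, trace_sub, e2, e3]
    ring
  have hexp : (Z * P * Z * P).trace
      = (Z * Z).trace - 2 * (Z * Z * Q).trace + (Q * Z * Q * Z).trace := by
    have e : Z * P * Z * P = Z * Z - Z * Q * Z - Z * Z * Q + Z * Q * Z * Q := by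
      rw [hP]; noncomm_ring
    rw [e, trace_add, trace_sub, trace_sub, trace_mul_cycle Z Q Z, trace_mul_comm (Z * Q * Z) Q,
      ← Matrix.mul_assoc, ← Matrix.mul_assoc]
    ring
  have hQZQ : 0 ≤ (Q * Z * Q * Z).trace := by
    have := hZ.conjTranspose_mul_mul_same Q
    rw [hQ.1.eq] at this
    exact this.trace_mul_nonneg hZ
  have hZZQ : (Z * Z * Q).trace ≤ Z.trace * (Z * Q).trace := by
    have := hZ.trace_smul_sub_mul_self.trace_mul_nonneg hQ
    rw [sub_mul, trace_sub, smul_mul_assoc, trace_smul, smul_eq_mul] at this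
    linarith
  rw [hsq, hexp]
  linarith

lemma PosSemidef.exists_trace_sq_sub_compression_le {A : Matrix n n ℝ} (hA : A.PosSemidef) :
    ∃ c : ℝ, 0 < c ∧ ∃ P : Matrix n n ℝ, P.IsHermitian ∧ P * A = 0 ∧
      ∀ Z : Matrix n n ℝ, Z.PosSemidef →
        c * ((Z - P * Z * P) * (Z - P * Z * P)).trace ≤ 2 * Z.trace * (Z * A).trace := by
  obtain ⟨c, hc, Q, hQ, hQQ, hQA, hAQ⟩ := hA.exists_projection_smul_le
  refine ⟨c, hc, 1 - Q, isHermitian_one.sub hQ.1, hQA, fun Z hZ => ?_⟩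
  have hZQ : c * (Z * Q).trace ≤ (Z * A).trace := by
    have := hZ.trace_mul_nonneg hAQ
    rw [mul_sub, trace_sub, mul_smul_comm, trace_smul, smul_eq_mul] at this
    linarith
  nlinarith [hZ.trace_sq_sub_conj_le hQ hQQ, hZ.trace_mul_nonneg hQ, hZ.trace_nonneg]

lemma PosDef.mul_log_det_inv_smul_le {Z : Matrix n n ℝ} (hZ : Z.PosDef) {y : ℝ} (hy : 0 < y) :
    y * Real.log (y⁻¹ • Z).det ≤ 2 * Fintype.card n * √(Z.trace * y) := by
  set t := y⁻¹ * Z.trace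
  have ht : 0 ≤ t := mul_nonneg (inv_nonneg.2 hy.le) hZ.posSemidef.trace_nonneg
  have hdet : 0 < (y⁻¹ • Z).det := (hZ.smul (inv_pos.2 hy)).det_pos
  have hle : (y⁻¹ • Z).det ≤ t ^ Fintype.card n := by
    simpa [t, trace_smul] using (hZ.posSemidef.smul (inv_nonneg.2 hy.le)).det_le_trace_pow
  have hlog : Real.log t ≤ 2 * √t := by
    have := Real.log_le_rpow_div ht (by norm_num : (0 : ℝ) < 1 / 2)
    rwa [← Real.sqrt_eq_rpow, div_eq_mul_inv, mul_comm, one_div, inv_inv] at this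
  have hsqrt : √(Z.trace * y) = y * √t := by
    rw [show Z.trace * y = y ^ 2 * t by simp only [t]; field_simp, Real.sqrt_mul (sq_nonneg _),
      Real.sqrt_sq hy.le]
  calc y * Real.log (y⁻¹ • Z).det ≤ y * (Fintype.card n * Real.log t) := by
        rw [← Real.log_pow]; gcongr
    _ ≤ y * (Fintype.card n * (2 * √t)) := by gcongr
    _ = 2 * Fintype.card n * √(Z.trace * y) := by rw [hsqrt]; ring

end Matrix

variable {d : ℕ}

lemma nrm_nonneg (u : E d) : 0 ≤ nrm u := Real.sqrt_nonneg _

lemma nrm_neg (u : E d) : nrm (-u) = nrm u := by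
  simp [nrm]

lemma nrm_sub_comm (u v : E d) : nrm (u - v) = nrm (v - u) := by
  rw [← neg_sub, nrm_neg]

lemma ip_sub_left (u v w : E d) : ip (u - v) w = ip u w - ip v w := by
  simp only [ip, Prod.fst_sub, Prod.snd_sub, sub_mul, trace_sub]
  ring

/-- Flattening the matrix part entrywise turns `ip` and `nrm` into the Euclidean inner product and
norm, as long as the matrix parts involved are symmetric. -/
def toL2 (d : ℕ) : E d →ₗ[ℝ] EuclideanSpace ℝ (Fin 2 ⊕ Fin d × Fin d) where
  toFun p := WithLp.toLp 2 (Sum.elim ![p.1, p.2.1] fun ij => p.2.2 ij.1 ij.2)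
  map_add' p q := by ext (i | ij) <;> [fin_cases i <;> rfl; rfl]
  map_smul' c p := by ext (i | ij) <;> [fin_cases i <;> rfl; rfl]

lemma ip_eq_inner (u : E d) {v : E d} (hv : v.2.2.IsSymm) :
    ip u v = inner ℝ (toL2 d u) (toL2 d v) := by
  simp [ip, toL2, PiLp.inner_apply, Fintype.sum_sum_type, Fintype.sum_prod_type, trace,
    mul_apply, hv.apply, mul_comm]

lemma nrm_eq_norm {u : E d} (hu : u.2.2.IsSymm) : nrm u = ‖toL2 d u‖ := by
  rw [nrm, ← Real.sqrt_sq (norm_nonneg _), ← real_inner_self_eq_norm_sq, ← ip_eq_inner u hu, ip]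
  ring_nf

lemma sq_nrm {p : E d} (hp : p.2.2.IsSymm) :
    nrm p ^ 2 = p.1 ^ 2 + p.2.1 ^ 2 + (p.2.2 * p.2.2).trace := by
  rw [nrm_eq_norm hp, ← real_inner_self_eq_norm_sq, ← ip_eq_inner p hp, ip]
  ring

lemma ip_le_nrm_mul_nrm {u v : E d} (hu : u.2.2.IsSymm) (hv : v.2.2.IsSymm) :
    ip u v ≤ nrm u * nrm v := by
  rw [ip_eq_inner u hv, nrm_eq_norm hu, nrm_eq_norm hv]
  exact real_inner_le_norm _ _

lemma nrm_sub_le {u v w : E d} (hu : u.2.2.IsSymm) (hv : v.2.2.IsSymm) (hw : w.2.2.IsSymm) :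
    nrm (u - w) ≤ nrm (u - v) + nrm (v - w) := by
  rw [nrm_eq_norm (hu.sub hw), nrm_eq_norm (hu.sub hv), nrm_eq_norm (hv.sub hw), map_sub, map_sub,
    map_sub]
  exact norm_sub_le_norm_sub_add_norm_sub _ _ _

lemma snd_le_nrm {p : E d} (hp : p.2.2.IsSymm) : p.2.1 ≤ nrm p := by
  simpa [ip, nrm] using ip_le_nrm_mul_nrm hp (v := (0, 1, 0)) isSymm_zero

lemma trace_le_sqrt_mul_nrm {p : E d} (hp : p.2.2.IsSymm) : p.2.2.trace ≤ √d * nrm p := by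
  simpa [ip, nrm, mul_comm] using ip_le_nrm_mul_nrm hp (v := (0, 0, 1)) isSymm_one

lemma sdist_le_nrm_sub (q : E d) {s : E d} {S : Set (E d)} (hs : s ∈ S) :
    sdist q S ≤ nrm (q - s) :=
  csInf_le ⟨0, fun _ ⟨_, _, hr⟩ => hr ▸ nrm_nonneg _⟩ ⟨s, hs, rfl⟩

lemma le_apply_sdist {q : E d} {S : Set (E d)} (hS : S.Nonempty) {g : ℝ → ℝ} (hg : Continuous g)
    {c R : ℝ} (hR : sdist q S < R) (h : ∀ p ∈ S, nrm (q - p) < R → c ≤ g (nrm (q - p))) :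
    c ≤ g (sdist q S) := by
  obtain ⟨s, hs⟩ := hS
  have hmem : sdist q S ∈ closure (Set.Iio R ∩ {r | ∃ s ∈ S, r = nrm (q - s)}) :=
    isOpen_Iio.inter_closure ⟨hR, csInf_mem_closure ⟨_, s, hs, rfl⟩
      ⟨0, fun _ ⟨_, _, hr⟩ => hr ▸ nrm_nonneg _⟩⟩
  refine closure_minimal ?_ (isClosed_le continuous_const hg) hmem
  rintro _ ⟨hr, p, hp, rfl⟩
  exact h p hp hr

lemma zero_mem_Klogdet : (0 : E d) ∈ Klogdet d := Or.inr ⟨le_rfl, rfl, PosSemidef.zero⟩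

lemma Klogdet_subset : Klogdet d ⊆
    {p | 0 ≤ p.2.1 ∧ p.2.2.PosSemidef ∧ p.1 ≤ 2 * d * √(p.2.2.trace * p.2.1)} := by
  rintro p (⟨hy, hZ, hx⟩ | ⟨hx, hy, hZ⟩)
  · exact ⟨hy.le, hZ.posSemidef, hx.trans (by simpa using hZ.mul_log_det_inv_smul_le hy)⟩
  · exact ⟨hy.ge, hZ, hx.trans (by positivity)⟩

def logdetFace (nZ : Matrix (Fin d) (Fin d) ℝ) : Set (E d) :=
  {p | p.1 ≤ 0 ∧ p.2.1 = 0 ∧ p.2.2.PosSemidef ∧ (p.2.2 * nZ).trace = 0}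

lemma exists_sq_nrm_sub_logdetFace_le {ny : ℝ} (hny : 0 < ny) {nZ : Matrix (Fin d) (Fin d) ℝ}
    (hnZ : nZ.PosSemidef) {R : ℝ} (hR : 0 ≤ R) :
    ∃ C : ℝ, 0 ≤ C ∧ ∀ p ∈ Klogdet d, nrm p ≤ R →
      ∃ s ∈ logdetFace nZ, nrm (p - s) ^ 2 ≤ C * ip p (0, ny, nZ) := by
  obtain ⟨c, hc, P, hP, hPnZ, hcomp⟩ := hnZ.exists_trace_sq_sub_compression_le
  refine ⟨(4 * d ^ 2 * (√d * R) + R) / ny + 2 * (√d * R) / c, by positivity, ?_⟩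
  rintro ⟨x, y, Z⟩ hp hpR
  obtain ⟨hy, hZ, hx⟩ := Klogdet_subset hp
  have hsymm : Z.IsSymm := hZ.isSymm
  have hyR : y ≤ R := (snd_le_nrm (p := (x, y, Z)) hsymm).trans hpR
  have hZR : Z.trace ≤ √d * R := (trace_le_sqrt_mul_nrm (p := (x, y, Z)) hsymm).trans (by gcongr)
  have hZnZ : 0 ≤ (Z * nZ).trace := hZ.trace_mul_nonneg hnZ
  have hW : (P * Z * P).PosSemidef := by
    have := hZ.conjTranspose_mul_mul_same P
    rwa [hP.eq] at this
  refine ⟨(min x 0, 0, P * Z * P), ⟨min_le_right _ _, rfl, hW, ?_⟩, ?_⟩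
  · rw [Matrix.mul_assoc, hPnZ, Matrix.mul_zero, trace_zero]
  have hnrm : nrm ((x, y, Z) - (min x 0, 0, P * Z * P)) ^ 2
      = max x 0 ^ 2 + y ^ 2 + ((Z - P * Z * P) * (Z - P * Z * P)).trace := by
    have hsub : (x, y, Z) - (min x 0, 0, P * Z * P) = (max x 0, y, Z - P * Z * P) := by
      ext <;> simp only [Prod.fst_sub, Prod.snd_sub, sub_zero]
      linarith [min_add_max x 0]
    rw [hsub, sq_nrm (hsymm.sub hW.isSymm)]
  have hx' : max x 0 ^ 2 ≤ 4 * d ^ 2 * (√d * R) * y := by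
    have hmax : max x 0 ≤ 2 * d * √(Z.trace * y) := max_le hx (by positivity)
    calc max x 0 ^ 2 ≤ (2 * d * √(Z.trace * y)) ^ 2 := by gcongr
      _ = 4 * d ^ 2 * (Z.trace * y) := by
        rw [mul_pow, Real.sq_sqrt (mul_nonneg hZ.trace_nonneg hy)]; ring
      _ ≤ 4 * d ^ 2 * (√d * R) * y := by
        rw [← mul_assoc]; gcongr
  have hZ' : ((Z - P * Z * P) * (Z - P * Z * P)).trace ≤ 2 * (√d * R) / c * (Z * nZ).trace := by
    rw [div_mul_eq_mul_div, le_div_iff₀ hc]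
    nlinarith [hcomp Z hZ, hZ.trace_nonneg]
  have hip : ip (x, y, Z) (0, ny, nZ) = y * ny + (Z * nZ).trace := by simp [ip]
  rw [hnrm, hip]
  set A := 4 * d ^ 2 * (√d * R) + R
  set B := 2 * (√d * R) / c
  have hA : 0 ≤ A := by positivity
  have hB : 0 ≤ B := by positivity
  have hAy : A / ny * (y * ny) = A * y := by field_simp
  nlinarith [mul_nonneg (div_nonneg hA hny.le) hZnZ, mul_nonneg hB (mul_nonneg hy hny.le)]

lemma exists_sdist_logdetFace_le {ny : ℝ} (hny : 0 < ny) {nZ : Matrix (Fin d) (Fin d) ℝ}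
    (hnZ : nZ.PosSemidef) {η : ℝ} (hη : 0 ≤ η) :
    ∃ κ : ℝ, 0 < κ ∧ ∀ q : E d, q.2.2.IsSymm → ip q (0, ny, nZ) = 0 → nrm q ≤ η →
      ∀ p ∈ Klogdet d, nrm (q - p) < η + 1 → sdist q (logdetFace nZ) ≤ κ * √(nrm (q - p)) := by
  obtain ⟨C, hC, hface⟩ := exists_sq_nrm_sub_logdetFace_le hny hnZ (by linarith : 0 ≤ 2 * η + 1)
  set n : E d := (0, ny, nZ)
  refine ⟨√(η + 1) + √(C * nrm n), by positivity, fun q hq hqn hqη p hp hδ => ?_⟩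
  have hps : p.2.2.IsSymm := (Klogdet_subset hp).2.1.isSymm
  set δ := nrm (q - p)
  have hpR : nrm p ≤ 2 * η + 1 := by
    have := nrm_sub_le hps hq (w := 0) isSymm_zero
    rw [sub_zero, sub_zero, nrm_sub_comm] at this
    linarith
  have hpn : ip p n ≤ nrm n * δ :=
    calc ip p n = ip (p - q) n := by rw [ip_sub_left, hqn, sub_zero]
      _ ≤ nrm (p - q) * nrm n := ip_le_nrm_mul_nrm (hps.sub hq) hnZ.isSymm
      _ = nrm n * δ := by rw [nrm_sub_comm, mul_comm]
  obtain ⟨s, hs, hpsC⟩ := hface p hp hpR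
  calc sdist q _ ≤ nrm (q - s) := sdist_le_nrm_sub q hs
    _ ≤ δ + nrm (p - s) := nrm_sub_le hq hps hs.2.2.1.isSymm
    _ ≤ √(η + 1) * √δ + √(C * nrm n) * √δ := by
      gcongr
      · calc δ = √δ * √δ := (Real.mul_self_sqrt (nrm_nonneg _)).symm
          _ ≤ √(η + 1) * √δ := by gcongr
      · rw [← Real.sqrt_mul (mul_nonneg hC (nrm_nonneg n)), mul_assoc]
        exact Real.le_sqrt_of_sq_le (hpsC.trans (by gcongr))
    _ = _ := by ring

theorem stmt_12_general (d : ℕ) (ny : ℝ) (hny : 0 < ny)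
    (nZ : Matrix (Fin d) (Fin d) ℝ) (hnZ : nZ.PosSemidef) :
    ∀ η : ℝ, 0 < η → ∃ κ : ℝ, 0 < κ ∧ ∀ q : E d, q.2.2.IsSymm →
      ip q (0, ny, nZ) = 0 → nrm q ≤ η →
      sdist q {p : E d | p.1 ≤ 0 ∧ p.2.1 = 0 ∧ p.2.2.PosSemidef ∧ (p.2.2 * nZ).trace = 0}
        ≤ κ * sdist q (Klogdet d) ^ ((1 : ℝ) / 2) := by
  intro η hη
  obtain ⟨κ, hκ, hbound⟩ := exists_sdist_logdetFace_le hny hnZ hη.le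
  refine ⟨κ, hκ, fun q hq hqn hqη => ?_⟩
  have hK : sdist q (Klogdet d) < η + 1 :=
    (sdist_le_nrm_sub q zero_mem_Klogdet).trans_lt (by rw [sub_zero]; linarith)
  rw [← Real.sqrt_eq_rpow]
  exact le_apply_sdist (g := fun r => κ * √r) ⟨0, zero_mem_Klogdet⟩ (by fun_prop) hK
    (hbound q hq hqn hqη)

/-- Theorem 3.2 (Hölderian error bound concerning `F_s` when `n_y > 0`): for
`n = (0, n_y, n_Z)` with `n_y > 0`, `n_Z ⪰ 0`, `0 < rank n_Z < d`, and any `η > 0` there is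
`κ > 0` with `dist(q, F_s) ≤ κ dist(q, K_logdet)^(1/2)` for all `q ∈ {n}^⊥`, `‖q‖ ≤ η`. -/
theorem stmt_12 (d : ℕ) (hd : 2 ≤ d) (ny : ℝ) (hny : 0 < ny)
    (nZ : Matrix (Fin d) (Fin d) ℝ) (hnZ : nZ.PosSemidef)
    (hrank_pos : 0 < nZ.rank) (hrank_lt : nZ.rank < d) :
    ∀ η : ℝ, 0 < η → ∃ κ : ℝ, 0 < κ ∧ ∀ q : E d, q.2.2.IsSymm →
      ip q (0, ny, nZ) = 0 → nrm q ≤ η →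
      sdist q {p : E d | p.1 ≤ 0 ∧ p.2.1 = 0 ∧ p.2.2.PosSemidef ∧ (p.2.2 * nZ).trace = 0}
        ≤ κ * sdist q (Klogdet d) ^ ((1 : ℝ) / 2) :=
  stmt_12_general d ny hny nZ hnZ
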